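/- Let f be a real-valued function on ℕ such that f(n)≥0 for all n and f², the function n↦f(n)², belongs to 𝒦⁻. Then every φ in the span of {ξ_n − ξ_{n+1} : n∈ℕ} satisfies φ ∈ D(f(N)²T_{f²}) ∩ D(T_{f²}f(N)); moreover, the operator f(N)T_{f²} + T_{f²}f(N), with domain D(f(N)T_{f²})∩D(T_{f²}f(N)), is symmetric. -/

import Mathlib

open Filter Topology
open scoped ENNReal

noncomputable section

abbrev l2 : Type := lp (fun _ : ℕ => ℂ) 2

def xi (n : ℕ) : l2 := lp.single 2 n 1

def FinSupp (φ : l2) : Prop := (Function.support (⇑φ : ℕ → ℂ)).Finite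

/-- The class 𝒦. -/
def MemK (f : ℕ → ℝ) : Prop := 0 < f 0 ∧ ∀ n, f n < f (n + 1)

/-- The class 𝒦⁻. -/
def MemKminus (f : ℕ → ℝ) : Prop := MemK f ∧ Summable (fun n => 1 / (f n) ^ 2)

def fsq (f : ℕ → ℝ) : ℕ → ℝ := fun n => (f n) ^ 2

/-- the sequence of the multiplication operator `f(N)` applied to φ -/
def mulSeq (f : ℕ → ℝ) (φ : ℕ → ℂ) : ℕ → ℂ := fun n => ((f n : ℝ) : ℂ) * φ n

/-- the sequence of `f(N)^p` applied to φ -/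
def powSeq (f : ℕ → ℝ) (p : ℕ) (φ : ℕ → ℂ) : ℕ → ℂ := fun n => (((f n) ^ p : ℝ) : ℂ) * φ n

/-- coordinates of `T_{f,m} φ`. -/
def TfmSeq (f : ℕ → ℝ) (m : ℕ) (φ : ℕ → ℂ) : ℕ → ℂ := fun n =>
  Complex.I * ∑ k ∈ Finset.Icc 1 m,
    ((if k ≤ n then φ (n - k) / ((f n - f (n - k) : ℝ) : ℂ) else 0)
      - φ (n + k) / ((f (n + k) - f n : ℝ) : ℂ))

/-- `(φ, ψ)` is in the graph of `T_f`. -/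
def InGraphTf (f : ℕ → ℝ) (φ ψ : l2) : Prop :=
  ∃ h : ∀ m, Memℓp (TfmSeq f m (⇑φ)) 2,
    Tendsto (fun m => (⟨TfmSeq f m (⇑φ), h m⟩ : l2)) atTop (𝓝 ψ)

/-- `(φ, ψ)` is in the graph of `S = f(N) T_{f²} + T_{f²} f(N)`, whose domain is
`D(f(N) T_{f²}) ∩ D(T_{f²} f(N))`. -/
def InGraphS (f : ℕ → ℝ) (φ ψ : l2) : Prop :=
  ∃ (T2φ T2Fφ : l2) (hF : Memℓp (mulSeq f ⇑φ) 2) (hFT : Memℓp (mulSeq f ⇑T2φ) 2),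
    InGraphTf (fsq f) φ T2φ ∧
    InGraphTf (fsq f) (⟨mulSeq f ⇑φ, hF⟩ : l2) T2Fφ ∧
    ψ = (⟨mulSeq f ⇑T2φ, hFT⟩ : l2) + T2Fφ

/-!
`T_F ξ_j` is the sequence `i / (F n - F j)`, square-summable because `F ∈ 𝒦⁻`. Off `n = j`,
`F(N) T_F ξ_j = i + F(j) T_F ξ_j`, so `T_F ξ_j ∉ D(F(N))`, but the constant `i` cancels in
`T_F (ξ_j - ξ_{j+1})`. As `f(N) ξ_j = f(j) ξ_j`, both domain statements extend linearly from the
generators to their span.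

For symmetry, fix a truncation `T_m = T_{f²,m}`. Because
`f a / (f b ^ 2 - f a ^ 2) + f b / (f b ^ 2 - f a ^ 2) = 1 / (f b - f a)`, the partial sums up to `N`
of `⟪T_m φ, f ψ⟫ + ⟪T_m (f φ), ψ⟫ - ⟪f φ, T_m ψ⟫ - ⟪φ, T_m (f ψ)⟫` telescope to a boundary term
`B_N`, a finite sum of pair terms `(φ̄_a ψ_{a+k} + φ̄_{a+k} ψ_a) / (f (a+k) - f a)` with `a` near `N`.
Weighting by `f (N+1) - f N` cancels these denominators, so `∑ (f (N+1) - f N) ‖B_{N+1}‖ < ∞`;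
as `f → ∞`, the limit of `B_N` must be `0`. Finally let `m → ∞`.
-/

open scoped InnerProductSpace

lemma memℓp_two_iff_summable_sq {α E : Type*} [NormedAddCommGroup E] {g : α → E} :
    Memℓp g 2 ↔ Summable fun n => ‖g n‖ ^ 2 := by
  rw [memℓp_gen_iff (by norm_num)]
  norm_num

lemma memℓp_two_of_eventually_norm_le_div {E : Type*} [NormedAddCommGroup E] {F : ℕ → ℝ}
    (hF : Summable fun n => 1 / F n ^ 2) {g : ℕ → E} {c : ℝ}
    (hg : ∀ᶠ n in atTop, ‖g n‖ ≤ c / F n) : Memℓp g 2 := by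
  rw [memℓp_two_iff_summable_sq]
  refine (hF.mul_left (c ^ 2)).of_norm_bounded_eventually_nat ?_
  filter_upwards [hg] with n hn
  calc ‖‖g n‖ ^ 2‖ = ‖g n‖ ^ 2 := by simp
    _ ≤ (c / F n) ^ 2 := pow_le_pow_left₀ (norm_nonneg _) hn 2
    _ = c ^ 2 * (1 / F n ^ 2) := by ring

lemma MemK.strictMono {F : ℕ → ℝ} (hF : MemK F) : StrictMono F :=
  strictMono_nat_of_lt_succ hF.2

lemma MemK.pos {F : ℕ → ℝ} (hF : MemK F) (n : ℕ) : 0 < F n :=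
  hF.1.trans_le (hF.strictMono.monotone n.zero_le)

lemma tendsto_atTop_of_summable_one_div_sq {F : ℕ → ℝ} (hpos : ∀ n, 0 < F n)
    (hF : Summable fun n => 1 / F n ^ 2) : Tendsto F atTop atTop := by
  have hsqrt : ∀ n, √(1 / F n ^ 2) = (F n)⁻¹ := fun n => by
    rw [one_div, Real.sqrt_inv, Real.sqrt_sq (hpos n).le]
  have hinv : Tendsto (fun n => (F n)⁻¹) atTop (𝓝[>] 0) := by
    refine tendsto_nhdsWithin_iff.2 ⟨?_, .of_forall fun n => inv_pos.2 (hpos n)⟩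
    have := (Real.continuous_sqrt.tendsto 0).comp hF.tendsto_atTop_zero
    rw [Real.sqrt_zero] at this
    exact this.congr hsqrt
  exact hinv.inv_tendsto_nhdsGT_zero.congr fun n => inv_inv (F n)

lemma MemKminus.tendsto_atTop {F : ℕ → ℝ} (hF : MemKminus F) : Tendsto F atTop atTop :=
  tendsto_atTop_of_summable_one_div_sq hF.1.pos hF.2

lemma tendsto_atTop_of_sq {f : ℕ → ℝ} (hf0 : ∀ n, 0 ≤ f n)
    (hf : Tendsto (fun n => f n ^ 2) atTop atTop) : Tendsto f atTop atTop :=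
  (Real.tendsto_sqrt_atTop.comp hf).congr fun n => Real.sqrt_sq (hf0 n)

lemma strictMono_of_sq {f : ℕ → ℝ} (hf0 : ∀ n, 0 ≤ f n) (hf : StrictMono fun n => f n ^ 2) :
    StrictMono f :=
  fun _ _ hab => (pow_lt_pow_iff_left₀ (hf0 _) (hf0 _) two_ne_zero).1 (hf hab)

/-- Up to the factor `i`, the `k`-th summand `L*^k Δ_k(F,N)⁻¹ - Δ_k(F,N)⁻¹ L^k` of `T_{F,m}`. -/
def shiftTerm (F : ℕ → ℝ) (k : ℕ) (φ : ℕ → ℂ) (n : ℕ) : ℂ :=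
  (if k ≤ n then φ (n - k) / ((F n - F (n - k) : ℝ) : ℂ) else 0)
    - φ (n + k) / ((F (n + k) - F n : ℝ) : ℂ)

lemma TfmSeq_eq (F : ℕ → ℝ) (m : ℕ) (φ : ℕ → ℂ) (n : ℕ) :
    TfmSeq F m φ n = Complex.I * ∑ k ∈ Finset.Icc 1 m, shiftTerm F k φ n := rfl

lemma TfmSeq_add (F : ℕ → ℝ) (m : ℕ) (φ ψ : ℕ → ℂ) :
    TfmSeq F m (φ + ψ) = TfmSeq F m φ + TfmSeq F m ψ := by
  ext n
  simp only [TfmSeq_eq, shiftTerm, Pi.add_apply, ← mul_add, ← Finset.sum_add_distrib]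
  congr 1
  refine Finset.sum_congr rfl fun k _ => ?_
  split_ifs <;> ring

lemma TfmSeq_smul (F : ℕ → ℝ) (m : ℕ) (c : ℂ) (φ : ℕ → ℂ) :
    TfmSeq F m (c • φ) = c • TfmSeq F m φ := by
  ext n
  simp only [TfmSeq_eq, shiftTerm, Pi.smul_apply, smul_eq_mul, Finset.mul_sum]
  refine Finset.sum_congr rfl fun k _ => ?_
  split_ifs <;> ring

lemma inGraphTf_iff {F : ℕ → ℝ} {φ ψ : l2} :
    InGraphTf F φ ψ ↔
      ∃ T : ℕ → l2, (∀ m, ⇑(T m) = TfmSeq F m ⇑φ) ∧ Tendsto T atTop (𝓝 ψ) := by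
  constructor
  · rintro ⟨_, hT⟩
    exact ⟨_, fun _ => rfl, hT⟩
  · rintro ⟨T, hT, hlim⟩
    refine ⟨fun m => hT m ▸ (T m).2, ?_⟩
    convert hlim with m
    exact lp.ext (hT m).symm

lemma inGraphTf_zero (F : ℕ → ℝ) : InGraphTf F 0 0 :=
  inGraphTf_iff.2 ⟨fun _ => 0, fun m => by ext n; simp [TfmSeq], tendsto_const_nhds⟩

lemma InGraphTf.add {F : ℕ → ℝ} {φ₁ φ₂ ψ₁ ψ₂ : l2} (h₁ : InGraphTf F φ₁ ψ₁)
    (h₂ : InGraphTf F φ₂ ψ₂) : InGraphTf F (φ₁ + φ₂) (ψ₁ + ψ₂) := by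
  obtain ⟨T₁, hT₁, hlim₁⟩ := inGraphTf_iff.1 h₁
  obtain ⟨T₂, hT₂, hlim₂⟩ := inGraphTf_iff.1 h₂
  refine inGraphTf_iff.2 ⟨T₁ + T₂, fun m => ?_, hlim₁.add hlim₂⟩
  simp only [Pi.add_apply, lp.coeFn_add, TfmSeq_add, hT₁, hT₂]

lemma InGraphTf.smul {F : ℕ → ℝ} {φ ψ : l2} (c : ℂ) (h : InGraphTf F φ ψ) :
    InGraphTf F (c • φ) (c • ψ) := by
  obtain ⟨T, hT, hlim⟩ := inGraphTf_iff.1 h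
  refine inGraphTf_iff.2 ⟨c • T, fun m => ?_, hlim.const_smul c⟩
  simp only [Pi.smul_apply, lp.coeFn_smul, TfmSeq_smul, hT]

lemma InGraphTf.sub {F : ℕ → ℝ} {φ₁ φ₂ ψ₁ ψ₂ : l2} (h₁ : InGraphTf F φ₁ ψ₁)
    (h₂ : InGraphTf F φ₂ ψ₂) : InGraphTf F (φ₁ - φ₂) (ψ₁ - ψ₂) := by
  simpa [sub_eq_add_neg] using h₁.add (h₂.smul (-1))

lemma mulSeq_add (g : ℕ → ℝ) (φ ψ : ℕ → ℂ) : mulSeq g (φ + ψ) = mulSeq g φ + mulSeq g ψ := by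
  ext n; simp [mulSeq, mul_add]

lemma mulSeq_smul (g : ℕ → ℝ) (c : ℂ) (φ : ℕ → ℂ) : mulSeq g (c • φ) = c • mulSeq g φ := by
  ext n; simp only [mulSeq, Pi.smul_apply, smul_eq_mul]; ring

lemma mulSeq_sub (g : ℕ → ℝ) (φ ψ : ℕ → ℂ) : mulSeq g (φ - ψ) = mulSeq g φ - mulSeq g ψ := by
  ext n; simp [mulSeq, mul_sub]

lemma mulSeq_zero (g : ℕ → ℝ) : mulSeq g 0 = 0 := by
  ext n; simp [mulSeq]

/-- `D(G(N) T_F)`. -/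
def domMulTf (F G : ℕ → ℝ) : Submodule ℂ l2 where
  carrier := {φ | ∃ ψ, InGraphTf F φ ψ ∧ Memℓp (mulSeq G ⇑ψ) 2}
  zero_mem' := ⟨0, inGraphTf_zero F, by rw [lp.coeFn_zero, mulSeq_zero]; exact zero_memℓp⟩
  add_mem' := by
    rintro φ₁ φ₂ ⟨ψ₁, h₁, hG₁⟩ ⟨ψ₂, h₂, hG₂⟩
    refine ⟨ψ₁ + ψ₂, h₁.add h₂, ?_⟩
    rw [lp.coeFn_add, mulSeq_add]
    exact hG₁.add hG₂
  smul_mem' := by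
    rintro c φ ⟨ψ, h, hG⟩
    refine ⟨c • ψ, h.smul c, ?_⟩
    rw [lp.coeFn_smul, mulSeq_smul]
    exact hG.const_smul c

lemma exists_inGraphTf_mk_iff {F : ℕ → ℝ} {g : ℕ → ℂ} :
    (∃ hg : Memℓp g 2, ∃ ψ, InGraphTf F ⟨g, hg⟩ ψ) ↔ ∃ x ψ : l2, ⇑x = g ∧ InGraphTf F x ψ := by
  constructor
  · rintro ⟨hg, ψ, h⟩
    exact ⟨_, ψ, rfl, h⟩
  · rintro ⟨x, ψ, rfl, h⟩
    exact ⟨x.2, ψ, h⟩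

/-- `D(T_F f(N))`. -/
def domTfMul (F f : ℕ → ℝ) : Submodule ℂ l2 where
  carrier := {φ | ∃ x ψ : l2, ⇑x = mulSeq f ⇑φ ∧ InGraphTf F x ψ}
  zero_mem' := ⟨0, 0, by rw [lp.coeFn_zero, mulSeq_zero], inGraphTf_zero F⟩
  add_mem' := by
    rintro φ₁ φ₂ ⟨x₁, ψ₁, hx₁, h₁⟩ ⟨x₂, ψ₂, hx₂, h₂⟩
    exact ⟨x₁ + x₂, ψ₁ + ψ₂, by rw [lp.coeFn_add, lp.coeFn_add, mulSeq_add, hx₁, hx₂], h₁.add h₂⟩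
  smul_mem' := by
    rintro c φ ⟨x, ψ, hx, h⟩
    exact ⟨c • x, c • ψ, by rw [lp.coeFn_smul, lp.coeFn_smul, mulSeq_smul, hx], h.smul c⟩

lemma coe_xi (j : ℕ) : ⇑(xi j) = Pi.single j 1 := rfl

lemma mulSeq_xi (g : ℕ → ℝ) (j : ℕ) : mulSeq g ⇑(xi j) = (g j : ℂ) • ⇑(xi j) := by
  ext n
  by_cases h : n = j
  · subst h; simp [mulSeq, coe_xi]
  · simp [mulSeq, coe_xi, h]

/-- The coordinates of `T_F ξ_j`; at `n = j` the division by zero gives the correct value `0`. -/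
def TfXiSeq (F : ℕ → ℝ) (j : ℕ) : ℕ → ℂ := fun n => Complex.I / ((F n - F j : ℝ) : ℂ)

lemma shiftTerm_xi (F : ℕ → ℝ) {k : ℕ} (hk : 1 ≤ k) (j n : ℕ) :
    shiftTerm F k ⇑(xi j) n = if k = n - j + (j - n) then 1 / ((F n - F j : ℝ) : ℂ) else 0 := by
  simp only [shiftTerm, coe_xi, Pi.single_apply]
  split_ifs <;> first | omega | simp only [zero_div, sub_zero, sub_self] | skip
  all_goals first
    | rw [‹n - k = j›]
    | rw [zero_sub, ← div_neg, ← Complex.ofReal_neg, neg_sub, ‹n + k = j›]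

lemma TfmSeq_xi (F : ℕ → ℝ) (m j : ℕ) :
    TfmSeq F m ⇑(xi j) = fun n => if n ∈ Finset.Icc (j - m) (j + m) then TfXiSeq F j n else 0 := by
  ext n
  rw [TfmSeq_eq, Finset.sum_congr rfl fun k hk => shiftTerm_xi F (Finset.mem_Icc.1 hk).1 j n,
    Finset.sum_ite_eq']
  by_cases hnj : n = j
  · subst hnj; simp [TfXiSeq]
  · have hwin : n - j + (j - n) ∈ Finset.Icc 1 m ↔ n ∈ Finset.Icc (j - m) (j + m) := by
      simp only [Finset.mem_Icc]; omega
    simp only [hwin, TfXiSeq, mul_ite, mul_one_div, mul_zero]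

lemma memℓp_TfXiSeq {F : ℕ → ℝ} (hF : MemKminus F) (j : ℕ) : Memℓp (TfXiSeq F j) 2 := by
  refine memℓp_two_of_eventually_norm_le_div hF.2 (c := 2) ?_
  filter_upwards [hF.tendsto_atTop.eventually_ge_atTop (2 * F j)] with n hn
  have hFj := hF.1.pos j
  rw [TfXiSeq, norm_div, Complex.norm_I, Complex.norm_real, Real.norm_eq_abs,
    abs_of_pos (by linarith), div_le_div_iff₀ (by linarith) (by linarith)]
  linarith

lemma inGraphTf_xi {F : ℕ → ℝ} (hF : MemKminus F) (j : ℕ) :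
    InGraphTf F (xi j) ⟨TfXiSeq F j, memℓp_TfXiSeq hF j⟩ := by
  have hwin : Tendsto (fun m => Finset.Icc (j - m) (j + m)) atTop atTop :=
    tendsto_atTop_finset_of_monotone (fun a b hab => Finset.Icc_subset_Icc (by omega) (by omega))
      fun n => ⟨j + n, by simp only [Finset.mem_Icc]; omega⟩
  refine inGraphTf_iff.2
    ⟨fun m => ∑ i ∈ Finset.Icc (j - m) (j + m), lp.single 2 i (TfXiSeq F j i), fun m => ?_, ?_⟩
  · ext n
    rw [lp.coeFn_sum, Finset.sum_apply, TfmSeq_xi]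
    simp only [lp.coeFn_single, Finset.sum_pi_single]
  · exact (lp.hasSum_single (E := fun _ : ℕ => ℂ) ENNReal.ofNat_ne_top
      ⟨TfXiSeq F j, memℓp_TfXiSeq hF j⟩).comp hwin

lemma mulSeq_TfXiSeq {F : ℕ → ℝ} (hF : Function.Injective F) (j : ℕ) :
    mulSeq F (TfXiSeq F j) = Complex.I • (1 - ⇑(xi j)) + (F j : ℂ) • TfXiSeq F j := by
  ext n
  by_cases hnj : n = j
  · subst hnj; simp [mulSeq, TfXiSeq, coe_xi]
  · have hne : ((F n - F j : ℝ) : ℂ) ≠ 0 := Complex.ofReal_ne_zero.2 (sub_ne_zero.2 (hF.ne hnj))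
    simp only [mulSeq, TfXiSeq, coe_xi, Pi.add_apply, Pi.smul_apply, Pi.sub_apply,
      Pi.one_apply, Pi.single_apply, hnj, if_false, smul_eq_mul]
    field_simp
    push_cast
    ring

lemma mem_domMulTf_xi_sub {F : ℕ → ℝ} (hF : MemKminus F) (j : ℕ) :
    xi j - xi (j + 1) ∈ domMulTf F F := by
  refine ⟨_, (inGraphTf_xi hF j).sub (inGraphTf_xi hF (j + 1)), ?_⟩
  have hτ : mulSeq F ⇑((⟨TfXiSeq F j, memℓp_TfXiSeq hF j⟩ : l2)
      - ⟨TfXiSeq F (j + 1), memℓp_TfXiSeq hF (j + 1)⟩)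
      = ⇑(Complex.I • (xi (j + 1) - xi j) + (F j : ℂ) • ⟨TfXiSeq F j, memℓp_TfXiSeq hF j⟩
        - (F (j + 1) : ℂ) • ⟨TfXiSeq F (j + 1), memℓp_TfXiSeq hF (j + 1)⟩) := by
    rw [lp.coeFn_sub, mulSeq_sub, mulSeq_TfXiSeq hF.1.strictMono.injective,
      mulSeq_TfXiSeq hF.1.strictMono.injective]
    ext n
    simp only [Pi.add_apply, Pi.sub_apply, Pi.smul_apply, lp.coeFn_add, lp.coeFn_sub,
      lp.coeFn_smul, smul_eq_mul]
    ring
  rw [hτ]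
  exact lp.memℓp _

lemma xi_mem_domTfMul {F : ℕ → ℝ} (hF : MemKminus F) (f : ℕ → ℝ) (j : ℕ) :
    xi j ∈ domTfMul F f :=
  ⟨(f j : ℂ) • xi j, _, by rw [lp.coeFn_smul, mulSeq_xi], (inGraphTf_xi hF j).smul _⟩

lemma span_le_domMulTf_inf_domTfMul {F : ℕ → ℝ} (hF : MemKminus F) (f : ℕ → ℝ) :
    Submodule.span ℂ (Set.range fun n : ℕ => xi n - xi (n + 1)) ≤ domMulTf F F ⊓ domTfMul F f :=
  Submodule.span_le.2 <| Set.range_subset_iff.2 fun j =>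
    ⟨mem_domMulTf_xi_sub hF j, sub_mem (xi_mem_domTfMul hF f j) (xi_mem_domTfMul hF f (j + 1))⟩

def symmDefect (f : ℕ → ℝ) (T : (ℕ → ℂ) → ℕ → ℂ) (φ ψ : ℕ → ℂ) (n : ℕ) : ℂ :=
  ⟪T φ n, mulSeq f ψ n⟫_ℂ + ⟪T (mulSeq f φ) n, ψ n⟫_ℂ
    - ⟪mulSeq f φ n, T ψ n⟫_ℂ - ⟪φ n, T (mulSeq f ψ) n⟫_ℂ

def pairTerm (f : ℕ → ℝ) (φ ψ : ℕ → ℂ) (k a : ℕ) : ℂ :=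
  (⟪φ a, ψ (a + k)⟫_ℂ + ⟪φ (a + k), ψ a⟫_ℂ) / ((f (a + k) - f a : ℝ) : ℂ)

lemma symmDefect_shiftTerm {f : ℕ → ℝ} (hf0 : ∀ n, 0 ≤ f n) (hf : StrictMono f) {k : ℕ}
    (hk : 1 ≤ k) (φ ψ : ℕ → ℂ) (n : ℕ) :
    symmDefect f (fun φ n => Complex.I * shiftTerm (fsq f) k φ n) φ ψ n
      = Complex.I * (pairTerm f φ ψ k n - if k ≤ n then pairTerm f φ ψ k (n - k) else 0) := by
  have hsq : ∀ {a b}, a < b → (f b : ℂ) ^ 2 - (f a : ℂ) ^ 2 ≠ 0 := fun {a b} hab => by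
    norm_cast
    nlinarith [hf hab, hf0 a]
  have hsub : ∀ {a b}, a < b → (f b : ℂ) - f a ≠ 0 := fun {a b} hab => by
    norm_cast; linarith [hf hab]
  have := hsub (show n < n + k by omega)
  have := hsq (show n < n + k by omega)
  simp only [symmDefect, shiftTerm, pairTerm, fsq, mulSeq, RCLike.inner_apply', map_mul, map_sub,
    map_div₀, Complex.conj_I, Complex.conj_ofReal, apply_ite (starRingEnd ℂ), map_zero]
  push_cast
  split_ifs with hkn
  · have := hsub (show n - k < n by omega)
    have := hsq (show n - k < n by omega)
    rw [Nat.sub_add_cancel hkn]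
    field_simp
    ring
  · field_simp
    ring

lemma symmDefect_sum (f : ℕ → ℝ) {ι : Type*} (s : Finset ι) (T : ι → (ℕ → ℂ) → ℕ → ℂ)
    (φ ψ : ℕ → ℂ) (n : ℕ) :
    symmDefect f (fun φ n => ∑ k ∈ s, T k φ n) φ ψ n = ∑ k ∈ s, symmDefect f (T k) φ ψ n := by
  simp only [symmDefect, inner_sum, sum_inner, Finset.sum_add_distrib, Finset.sum_sub_distrib]

lemma symmDefect_TfmSeq {f : ℕ → ℝ} (hf0 : ∀ n, 0 ≤ f n) (hf : StrictMono f) (m : ℕ)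
    (φ ψ : ℕ → ℂ) (n : ℕ) :
    symmDefect f (TfmSeq (fsq f) m) φ ψ n = Complex.I * ∑ k ∈ Finset.Icc 1 m,
      (pairTerm f φ ψ k n - if k ≤ n then pairTerm f φ ψ k (n - k) else 0) := by
  have hT : TfmSeq (fsq f) m = fun φ n =>
      ∑ k ∈ Finset.Icc 1 m, Complex.I * shiftTerm (fsq f) k φ n := by
    ext φ n; rw [TfmSeq_eq, Finset.mul_sum]
  rw [hT, symmDefect_sum, Finset.mul_sum]
  exact Finset.sum_congr rfl fun k hk =>
    symmDefect_shiftTerm hf0 hf (Finset.mem_Icc.1 hk).1 φ ψ n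

lemma sum_range_sub_ite_eq_sum_Ico {M : Type*} [AddCommGroup M] (g : ℕ → M) (k N : ℕ) :
    ∑ n ∈ Finset.range N, (g n - if k ≤ n then g (n - k) else 0)
      = ∑ a ∈ Finset.Ico (N - k) N, g a := by
  induction N with
  | zero => simp
  | succ N ih =>
    rw [Finset.sum_range_succ, ih, Finset.sum_Ico_eq_sub _ (Nat.sub_le N k),
      Finset.sum_Ico_eq_sub _ (Nat.sub_le (N + 1) k), Finset.sum_range_succ]
    split_ifs with hkN
    · rw [show N + 1 - k = N - k + 1 by omega, Finset.sum_range_succ]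
      abel
    · rw [show N + 1 - k = 0 by omega, show N - k = 0 by omega]
      abel

def boundaryTerm (f : ℕ → ℝ) (m : ℕ) (φ ψ : ℕ → ℂ) (N : ℕ) : ℂ :=
  Complex.I * ∑ k ∈ Finset.Icc 1 m, ∑ a ∈ Finset.Ico (N - k) N, pairTerm f φ ψ k a

lemma sum_range_symmDefect {f : ℕ → ℝ} (hf0 : ∀ n, 0 ≤ f n) (hf : StrictMono f) (m : ℕ)
    (φ ψ : ℕ → ℂ) (N : ℕ) :
    ∑ n ∈ Finset.range N, symmDefect f (TfmSeq (fsq f) m) φ ψ n = boundaryTerm f m φ ψ N := by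
  simp only [symmDefect_TfmSeq hf0 hf, ← Finset.mul_sum, boundaryTerm]
  rw [Finset.sum_comm]
  simp only [sum_range_sub_ite_eq_sum_Ico]

lemma sub_mul_norm_pairTerm_le {f : ℕ → ℝ} (hf : Monotone f) (φ ψ : ℕ → ℂ) (k a : ℕ) :
    (f (a + k) - f a) * ‖pairTerm f φ ψ k a‖ ≤ ‖φ a‖ * ‖ψ (a + k)‖ + ‖φ (a + k)‖ * ‖ψ a‖ := by
  have hd : 0 ≤ f (a + k) - f a := sub_nonneg.2 (hf (Nat.le_add_right a k))
  rw [pairTerm, norm_div, Complex.norm_real, Real.norm_eq_abs, abs_of_nonneg hd]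
  calc (f (a + k) - f a) * (‖⟪φ a, ψ (a + k)⟫_ℂ + ⟪φ (a + k), ψ a⟫_ℂ‖ / (f (a + k) - f a))
      ≤ ‖⟪φ a, ψ (a + k)⟫_ℂ + ⟪φ (a + k), ψ a⟫_ℂ‖ := by
        rcases hd.eq_or_lt with h | h
        · rw [← h, zero_mul]; exact norm_nonneg _
        · rw [mul_div_cancel₀ _ h.ne']
    _ ≤ ‖φ a‖ * ‖ψ (a + k)‖ + ‖φ (a + k)‖ * ‖ψ a‖ :=
      (norm_add_le _ _).trans (add_le_add (norm_inner_le_norm _ _) (norm_inner_le_norm _ _))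

/-- Exchanging the order of summation, each `x a` is weighted by `∑_{a ≤ j < a + k} (g (j+1) - g j)`,
which telescopes to `g (a + k) - g a`. -/
lemma sum_sub_mul_sum_Ico_le {g : ℕ → ℝ} (hg : Monotone g) {x : ℕ → ℝ} (hx : ∀ a, 0 ≤ x a)
    (k N : ℕ) :
    ∑ j ∈ Finset.range N, (g (j + 1) - g j) * ∑ a ∈ Finset.Ico (j + 1 - k) (j + 1), x a
      ≤ ∑ a ∈ Finset.range N, (g (a + k) - g a) * x a := by
  have hstep : ∀ j, 0 ≤ g (j + 1) - g j := fun j => sub_nonneg.2 (hg j.le_succ)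
  calc ∑ j ∈ Finset.range N, (g (j + 1) - g j) * ∑ a ∈ Finset.Ico (j + 1 - k) (j + 1), x a
      = ∑ a ∈ Finset.range N, ∑ j ∈ Finset.Ico a (min (a + k) N), (g (j + 1) - g j) * x a := by
        simp only [Finset.mul_sum]
        refine Finset.sum_comm' fun j a => ?_
        simp only [Finset.mem_range, Finset.mem_Ico]
        omega
    _ ≤ ∑ a ∈ Finset.range N, ∑ j ∈ Finset.Ico a (a + k), (g (j + 1) - g j) * x a :=
        Finset.sum_le_sum fun a _ => Finset.sum_le_sum_of_subset_of_nonneg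
          (Finset.Ico_subset_Ico_right (min_le_left _ _))
          fun j _ _ => mul_nonneg (hstep j) (hx a)
    _ = ∑ a ∈ Finset.range N, (g (a + k) - g a) * x a := by
        simp only [← Finset.sum_mul, Finset.sum_Ico_sub g (Nat.le_add_right _ _)]

lemma summable_norm_mul_norm {u v : ℕ → ℂ} (hu : Summable fun n => ‖u n‖ ^ 2)
    (hv : Summable fun n => ‖v n‖ ^ 2) : Summable fun n => ‖u n‖ * ‖v n‖ :=
  Summable.of_nonneg_of_le (fun n => by positivity)
    (fun n => by nlinarith [sq_nonneg (‖u n‖ - ‖v n‖)]) ((hu.add hv).div_const 2)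

lemma sum_sub_mul_norm_boundaryTerm_le {f : ℕ → ℝ} (hf : Monotone f) {φ ψ : ℕ → ℂ}
    (hφ : Summable fun n => ‖φ n‖ ^ 2) (hψ : Summable fun n => ‖ψ n‖ ^ 2) (m N : ℕ) :
    ∑ j ∈ Finset.range N, (f (j + 1) - f j) * ‖boundaryTerm f m φ ψ (j + 1)‖
      ≤ ∑ k ∈ Finset.Icc 1 m, ∑' a, (‖φ a‖ * ‖ψ (a + k)‖ + ‖φ (a + k)‖ * ‖ψ a‖) := by
  have hstep : ∀ j, 0 ≤ f (j + 1) - f j := fun j => sub_nonneg.2 (hf j.le_succ)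
  have hB : ∀ M, ‖boundaryTerm f m φ ψ M‖
      ≤ ∑ k ∈ Finset.Icc 1 m, ∑ a ∈ Finset.Ico (M - k) M, ‖pairTerm f φ ψ k a‖ := fun M => by
    rw [boundaryTerm, norm_mul, Complex.norm_I, one_mul]
    exact (norm_sum_le _ _).trans (Finset.sum_le_sum fun k _ => norm_sum_le _ _)
  have hsum : ∀ k, Summable fun a => ‖φ a‖ * ‖ψ (a + k)‖ + ‖φ (a + k)‖ * ‖ψ a‖ := fun k =>
    (summable_norm_mul_norm hφ ((summable_nat_add_iff (f := fun n => ‖ψ n‖ ^ 2) k).2 hψ)).add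
      (summable_norm_mul_norm ((summable_nat_add_iff (f := fun n => ‖φ n‖ ^ 2) k).2 hφ) hψ)
  calc ∑ j ∈ Finset.range N, (f (j + 1) - f j) * ‖boundaryTerm f m φ ψ (j + 1)‖
      ≤ ∑ j ∈ Finset.range N, (f (j + 1) - f j) * ∑ k ∈ Finset.Icc 1 m,
          ∑ a ∈ Finset.Ico (j + 1 - k) (j + 1), ‖pairTerm f φ ψ k a‖ :=
        Finset.sum_le_sum fun j _ => mul_le_mul_of_nonneg_left (hB (j + 1)) (hstep j)
    _ = ∑ k ∈ Finset.Icc 1 m, ∑ j ∈ Finset.range N, (f (j + 1) - f j) *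
          ∑ a ∈ Finset.Ico (j + 1 - k) (j + 1), ‖pairTerm f φ ψ k a‖ := by
        simp only [Finset.mul_sum]
        exact Finset.sum_comm
    _ ≤ ∑ k ∈ Finset.Icc 1 m, ∑ a ∈ Finset.range N, (f (a + k) - f a) * ‖pairTerm f φ ψ k a‖ :=
        Finset.sum_le_sum fun k _ => sum_sub_mul_sum_Ico_le hf (fun a => norm_nonneg _) k N
    _ ≤ ∑ k ∈ Finset.Icc 1 m, ∑' a, (‖φ a‖ * ‖ψ (a + k)‖ + ‖φ (a + k)‖ * ‖ψ a‖) :=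
        Finset.sum_le_sum fun k _ =>
          (Finset.sum_le_sum fun a _ => sub_mul_norm_pairTerm_le hf φ ψ k a).trans
            ((hsum k).sum_le_tsum _ fun a _ => by positivity)

lemma eq_zero_of_tendsto_of_sum_sub_mul_norm_le {E : Type*} [NormedAddCommGroup E] {g : ℕ → ℝ}
    (hg : Monotone g) (hg_top : Tendsto g atTop atTop) {C : ℕ → E} {L : E}
    (hC : Tendsto C atTop (𝓝 L)) {K : ℝ}
    (hK : ∀ N, ∑ j ∈ Finset.range N, (g (j + 1) - g j) * ‖C (j + 1)‖ ≤ K) : L = 0 := by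
  by_contra hL
  have hL2 : 0 < ‖L‖ / 2 := half_pos (norm_pos_iff.2 hL)
  obtain ⟨N₀, hN₀⟩ := eventually_atTop.1 (hC.norm.eventually (lt_mem_nhds (half_lt_self
    (norm_pos_iff.2 hL))))
  obtain ⟨N, hN, hN₀N⟩ :=
    ((hg_top.eventually_gt_atTop (g N₀ + K / (‖L‖ / 2))).and (eventually_ge_atTop N₀)).exists
  have : (g N - g N₀) * (‖L‖ / 2) ≤ K := calc
    (g N - g N₀) * (‖L‖ / 2) = ∑ j ∈ Finset.Ico N₀ N, (g (j + 1) - g j) * (‖L‖ / 2) := by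
      rw [← Finset.sum_mul, Finset.sum_Ico_sub g hN₀N]
    _ ≤ ∑ j ∈ Finset.Ico N₀ N, (g (j + 1) - g j) * ‖C (j + 1)‖ :=
      Finset.sum_le_sum fun j hj => mul_le_mul_of_nonneg_left
        (hN₀ _ (by linarith [(Finset.mem_Ico.1 hj).1])).le (sub_nonneg.2 (hg j.le_succ))
    _ ≤ ∑ j ∈ Finset.range N, (g (j + 1) - g j) * ‖C (j + 1)‖ :=
      Finset.sum_le_sum_of_subset_of_nonneg (fun j hj => by simp_all)
        fun j _ _ => mul_nonneg (sub_nonneg.2 (hg j.le_succ)) (norm_nonneg _)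
    _ ≤ K := hK N
  rw [← lt_sub_iff_add_lt', div_lt_iff₀ hL2] at hN
  linarith

lemma inner_eq_inner_of_coe_eq_mulSeq {f : ℕ → ℝ} {x x' y y' : l2} (hx : ⇑x' = mulSeq f ⇑x)
    (hy : ⇑y' = mulSeq f ⇑y) : ⟪x', y⟫_ℂ = ⟪x, y'⟫_ℂ := by
  rw [lp.inner_eq_tsum, lp.inner_eq_tsum, hx, hy]
  congr 1
  ext n
  simp only [mulSeq, RCLike.inner_apply', map_mul, Complex.conj_ofReal]
  ring

lemma inner_TfmSeq_symm {f : ℕ → ℝ} (hf0 : ∀ n, 0 ≤ f n) (hf : StrictMono f)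
    (hf_top : Tendsto f atTop atTop) (m : ℕ) {φ ψ fφ fψ Tφ Tψ Tfφ Tfψ : l2}
    (hfφ : ⇑fφ = mulSeq f ⇑φ) (hfψ : ⇑fψ = mulSeq f ⇑ψ)
    (hTφ : ⇑Tφ = TfmSeq (fsq f) m ⇑φ) (hTψ : ⇑Tψ = TfmSeq (fsq f) m ⇑ψ)
    (hTfφ : ⇑Tfφ = TfmSeq (fsq f) m ⇑fφ) (hTfψ : ⇑Tfψ = TfmSeq (fsq f) m ⇑fψ) :
    ⟪Tφ, fψ⟫_ℂ + ⟪Tfφ, ψ⟫_ℂ = ⟪fφ, Tψ⟫_ℂ + ⟪φ, Tfψ⟫_ℂ := by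
  have hsum : HasSum (symmDefect f (TfmSeq (fsq f) m) ⇑φ ⇑ψ)
      (⟪Tφ, fψ⟫_ℂ + ⟪Tfφ, ψ⟫_ℂ - ⟪fφ, Tψ⟫_ℂ - ⟪φ, Tfψ⟫_ℂ) := by
    have h := (((lp.hasSum_inner (𝕜 := ℂ) Tφ fψ).add (lp.hasSum_inner (𝕜 := ℂ) Tfφ ψ)).sub
      (lp.hasSum_inner (𝕜 := ℂ) fφ Tψ)).sub (lp.hasSum_inner (𝕜 := ℂ) φ Tfψ)
    rw [hTfφ, hTfψ, hTφ, hTψ, hfφ, hfψ] at h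
    exact h
  have hB := hsum.tendsto_sum_nat
  simp only [sum_range_symmDefect hf0 hf] at hB
  have hzero := eq_zero_of_tendsto_of_sum_sub_mul_norm_le hf.monotone hf_top hB
    (sum_sub_mul_norm_boundaryTerm_le hf.monotone (memℓp_two_iff_summable_sq.1 (lp.memℓp φ))
      (memℓp_two_iff_summable_sq.1 (lp.memℓp ψ)) m)
  linear_combination hzero

lemma inner_symm_of_inGraphS {f : ℕ → ℝ} (hf0 : ∀ n, 0 ≤ f n) (hf : StrictMono f)
    (hf_top : Tendsto f atTop atTop) {φ ψ Sφ Sψ : l2} (hSφ : InGraphS f φ Sφ)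
    (hSψ : InGraphS f ψ Sψ) : ⟪Sφ, ψ⟫_ℂ = ⟪φ, Sψ⟫_ℂ := by
  obtain ⟨T2φ, T2fφ, hfφ, _, hT2φ, hT2fφ, rfl⟩ := hSφ
  obtain ⟨T2ψ, T2fψ, hfψ, _, hT2ψ, hT2fψ, rfl⟩ := hSψ
  obtain ⟨Tφ, hTφ, hlimφ⟩ := inGraphTf_iff.1 hT2φ
  obtain ⟨Tψ, hTψ, hlimψ⟩ := inGraphTf_iff.1 hT2ψ
  obtain ⟨Tfφ, hTfφ, hlimfφ⟩ := inGraphTf_iff.1 hT2fφ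
  obtain ⟨Tfψ, hTfψ, hlimfψ⟩ := inGraphTf_iff.1 hT2fψ
  have hlim : ⟪T2φ, ⟨mulSeq f ⇑ψ, hfψ⟩⟫_ℂ + ⟪T2fφ, ψ⟫_ℂ
      = ⟪(⟨mulSeq f ⇑φ, hfφ⟩ : l2), T2ψ⟫_ℂ + ⟪φ, T2fψ⟫_ℂ := by
    refine tendsto_nhds_unique ((hlimφ.inner tendsto_const_nhds).add
      (hlimfφ.inner tendsto_const_nhds)) ?_
    simp only [inner_TfmSeq_symm hf0 hf hf_top _ rfl rfl (hTφ _) (hTψ _) (hTfφ _) (hTfψ _)]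
    exact (tendsto_const_nhds.inner hlimψ).add (tendsto_const_nhds.inner hlimfψ)
  rw [inner_add_left, inner_add_right,
    inner_eq_inner_of_coe_eq_mulSeq (x := T2φ) (y := ψ) (y' := ⟨_, hfψ⟩) rfl rfl,
    ← inner_eq_inner_of_coe_eq_mulSeq (x := φ) (x' := ⟨_, hfφ⟩) (y := T2ψ) rfl rfl]
  exact hlim

/-- Let `f : ℕ → ℝ` be nonnegative with `f² ∈ 𝒦⁻`. Then every `φ` in the
span of `{ξ_n - ξ_{n+1}}` lies in `D(f(N)² T_{f²}) ∩ D(T_{f²} f(N))`; moreover the operator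
`f(N) T_{f²} + T_{f²} f(N)`, with domain `D(f(N) T_{f²}) ∩ D(T_{f²} f(N))`, is symmetric. -/
theorem stmt18 (f : ℕ → ℝ) (hf0 : ∀ n, 0 ≤ f n) (hf : MemKminus (fsq f)) :
    (∀ φ : l2, φ ∈ Submodule.span ℂ (Set.range fun n : ℕ => xi n - xi (n + 1)) →
      (∃ Tφ : l2, InGraphTf (fsq f) φ Tφ ∧ Memℓp (mulSeq (fsq f) ⇑Tφ) 2) ∧
      (∃ hF : Memℓp (mulSeq f ⇑φ) 2, ∃ ψ : l2, InGraphTf (fsq f) (⟨mulSeq f ⇑φ, hF⟩ : l2) ψ)) ∧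
    (∀ φ ψ Sφ Sψ : l2, InGraphS f φ Sφ → InGraphS f ψ Sψ →
      (inner ℂ Sφ ψ : ℂ) = inner ℂ φ Sψ) := by
  have hmono : StrictMono f := strictMono_of_sq hf0 hf.1.strictMono
  have htop : Tendsto f atTop atTop := tendsto_atTop_of_sq hf0 hf.tendsto_atTop
  refine ⟨fun φ hφ => ?_, fun φ ψ Sφ Sψ => inner_symm_of_inGraphS hf0 hmono htop⟩
  obtain ⟨hT, hTf⟩ := span_le_domMulTf_inf_domTfMul hf f hφ
  exact ⟨hT, exists_inGraphTf_mk_iff.2 hTf⟩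
end
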